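/- For μ ∈ ℝⁿ, the sum over i of the restricted weighted symmetric functions satisfies Σ_{i=1}^{n} σ_{k,i}^∞(μ₀, μ) = (n−k) σ_k^∞(μ₀, μ) + μ₀ σ_{k−1}^∞(μ₀, μ). -/

import Mathlib

/-! Each `k`-subset `t` of the coordinates is counted once for every `i ∉ t`, so
`∑ᵢ σ_{k,i}(μ) = (n - k) σ_k(μ)`. Applied termwise to `σ_k^∞`, this puts the coefficient
`n - k + j` on `μ₀^j / j! · σ_{k-j}(μ)`; the surplus `j · μ₀^j / j! = μ₀ · μ₀^(j-1) / (j-1)!`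
reassembles into `μ₀ σ_{k-1}^∞(μ₀, μ)`. -/

/-- The `k`-th elementary symmetric polynomial of `μ : Fin n → ℝ`. -/
noncomputable def esymm {n : ℕ} (k : ℕ) (μ : Fin n → ℝ) : ℝ :=
  ∑ s ∈ Finset.powersetCard k (Finset.univ : Finset (Fin n)), ∏ i ∈ s, μ i

/-- The weighted elementary symmetric function
`σ_k^∞(μ₀, μ) = ∑_{j=0}^k (μ₀^j / j!) σ_{k-j}(μ)`. -/
noncomputable def esymmInf {n : ℕ} (k : ℕ) (μ0 : ℝ) (μ : Fin n → ℝ) : ℝ :=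
  ∑ j ∈ Finset.range (k + 1), μ0 ^ j / (Nat.factorial j) * esymm (k - j) μ

open Finset

theorem sum_sum_powersetCard_erase {ι M : Type*} [DecidableEq ι] [AddCommMonoid M]
    (s : Finset ι) (k : ℕ) (g : Finset ι → M) :
    ∑ i ∈ s, ∑ t ∈ powersetCard k (s.erase i), g t = (#s - k) • ∑ t ∈ powersetCard k s, g t := by
  have h_erase : ∀ i, powersetCard k (s.erase i) = {t ∈ powersetCard k s | i ∉ t} := by
    intro i; ext t; simp only [mem_powersetCard, subset_erase, mem_filter]; tauto
  simp only [h_erase, sum_filter]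
  rw [sum_comm, smul_sum]
  refine sum_congr rfl fun t ht => ?_
  obtain ⟨hts, htk⟩ := mem_powersetCard.mp ht
  rw [← sum_filter, sum_const, filter_notMem_eq_sdiff, card_sdiff_of_subset hts, htk]

theorem esymm_comp_succAbove {m : ℕ} (k : ℕ) (i : Fin (m + 1)) (μ : Fin (m + 1) → ℝ) :
    esymm k (μ ∘ i.succAbove) = ∑ t ∈ powersetCard k (univ.erase i), ∏ j ∈ t, μ j := by
  rw [Fin.univ_succAbove _ i, erase_cons, powersetCard_map, sum_map, esymm]
  exact sum_congr rfl fun t _ => (prod_map t i.succAboveEmb μ).symm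

theorem esymm_eq_zero_of_card_lt {n k : ℕ} (μ : Fin n → ℝ) (h : n < k) : esymm k μ = 0 := by
  rw [esymm, powersetCard_eq_empty.mpr (by simpa using h), sum_empty]

theorem sum_esymm_comp_succAbove {m : ℕ} (k : ℕ) (μ : Fin (m + 1) → ℝ) :
    ∑ i : Fin (m + 1), esymm k (μ ∘ i.succAbove) = ((m + 1 : ℝ) - k) * esymm k μ := by
  simp only [esymm_comp_succAbove]
  rw [sum_sum_powersetCard_erase, nsmul_eq_mul, ← esymm, card_univ, Fintype.card_fin]
  rcases le_or_gt k (m + 1) with hk | hk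
  · push_cast [Nat.cast_sub hk]; ring
  · simp [esymm_eq_zero_of_card_lt μ hk]

theorem succ_mul_pow_div_factorial (x : ℝ) (j : ℕ) :
    ((j + 1 : ℕ) : ℝ) * (x ^ (j + 1) / (j + 1).factorial) = x * (x ^ j / j.factorial) := by
  rw [Nat.factorial_succ]; push_cast; field_simp; ring

theorem sum_natCast_mul_pow_div_factorial_mul_esymm {n : ℕ} (k : ℕ) (μ0 : ℝ) (μ : Fin n → ℝ) :
    ∑ j ∈ range (k + 2), (j : ℝ) * (μ0 ^ j / j.factorial) * esymm (k + 1 - j) μ =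
      μ0 * esymmInf k μ0 μ := by
  rw [sum_range_succ', esymmInf, mul_sum]
  simp only [Nat.cast_zero, zero_mul, add_zero]
  refine sum_congr rfl fun j _ => ?_
  rw [succ_mul_pow_div_factorial, Nat.add_sub_add_right, mul_assoc]

/-- `∑_{i=1}^{n} σ_{k,i}^∞(μ₀, μ) = (n−k) σ_k^∞(μ₀, μ) + μ₀ σ_{k−1}^∞(μ₀, μ)` where `μ` has `n`
variables (here `n = m + 1` and removal of the `i`-th variable is via `Fin.succAbove`). -/
theorem sum_esymmInf_remove {m : ℕ} (k : ℕ) (hk : 1 ≤ k) (μ0 : ℝ) (μ : Fin (m + 1) → ℝ) :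
    ∑ i : Fin (m + 1), esymmInf k μ0 (μ ∘ i.succAbove) =
      ((m + 1 : ℝ) - k) * esymmInf k μ0 μ + μ0 * esymmInf (k - 1) μ0 μ := by
  obtain ⟨k, rfl⟩ := Nat.exists_eq_add_of_le' hk
  calc ∑ i : Fin (m + 1), esymmInf (k + 1) μ0 (μ ∘ i.succAbove)
      = ∑ j ∈ range (k + 2),
          μ0 ^ j / j.factorial * (((m + 1 : ℝ) - (k + 1 - j : ℕ)) * esymm (k + 1 - j) μ) := by
        simp only [esymmInf, ← sum_esymm_comp_succAbove, mul_sum]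
        exact sum_comm
    _ = ∑ j ∈ range (k + 2),
          (((m + 1 : ℝ) - (k + 1 : ℕ)) * (μ0 ^ j / j.factorial * esymm (k + 1 - j) μ)
            + j * (μ0 ^ j / j.factorial) * esymm (k + 1 - j) μ) := by
        refine sum_congr rfl fun j hj => ?_
        push_cast [Nat.cast_sub (mem_range_succ_iff.mp hj)]
        ring
    _ = ((m + 1 : ℝ) - (k + 1 : ℕ)) * esymmInf (k + 1) μ0 μ + μ0 * esymmInf (k + 1 - 1) μ0 μ := by
        rw [sum_add_distrib, ← mul_sum, sum_natCast_mul_pow_div_factorial_mul_esymm,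
          Nat.add_sub_cancel]
        rfl
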